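/- arXiv:2305.03290 — 3 statements merged into one kernel-verified Lean document; each statement's English description precedes it below -/
import Mathlib

section
/- Let m ≥ 2 and let p be a pinned vertex attached to x ∈ V. Suppose the underlying graph of the voltage digraph contains a 'lollipop': a path from x to a vertex v consisting of s−1 ≥ 0 steps through pairwise distinct vertices (so the path from p through x to v in the lift data has length s ≥ 1), together with a cycle of length q ≥ 3 through v in the underlying graph whose vertices are pairwise distinct and meet the path only at v. If the net voltage B of the cycle is nonzero in ZMod m, then the lift with pinned vertices contains a cycle of length 2s + q passing through p. -/
/-- A voltage digraph over `ZMod m`: an irreflexive arc set `A ⊆ V × V` together with a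
voltage function assigning to each arc an element of `ZMod m`. -/
structure VoltageDigraph (V : Type) (m : ℕ) where
  A : Set (V × V)
  irrefl : ∀ v : V, (v, v) ∉ A
  vol : V × V → ZMod m

namespace VoltageDigraph

variable {V : Type} {m : ℕ}

/-- The underlying simple graph of a voltage digraph: `v` is adjacent to `w` iff
`(v,w) ∈ A` or `(w,v) ∈ A`. -/
def underlying (D : VoltageDigraph V m) : SimpleGraph V where
  Adj v w := (v, w) ∈ D.A ∨ (w, v) ∈ D.A
  symm := ⟨fun v w h => h.symm⟩
  loopless := ⟨fun v h => h.elim (D.irrefl v) (D.irrefl v)⟩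

/-- The lift of a voltage digraph: the simple graph on `V × ZMod m` in which `(v,i)` and
`(w,j)` are adjacent iff `(v,w) ∈ A` and `j = i + vol (v,w)`, or `(w,v) ∈ A` and
`i = j + vol (w,v)`. -/
def lift (D : VoltageDigraph V m) : SimpleGraph (V × ZMod m) where
  Adj p q := ((p.1, q.1) ∈ D.A ∧ q.2 = p.2 + D.vol (p.1, q.1)) ∨
    ((q.1, p.1) ∈ D.A ∧ p.2 = q.2 + D.vol (q.1, p.1))
  symm := ⟨fun p q h => h.symm⟩
  loopless := ⟨fun p h => h.elim (fun h' => D.irrefl p.1 h'.1) (fun h' => D.irrefl p.1 h'.1)⟩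

/-- The signed voltage of a single step `v → w` of a walk in the underlying graph:
`vol (v,w)` if the step traverses the arc `(v,w)` from tail to head, and `- vol (w,v)`
otherwise (i.e. if it traverses the arc `(w,v)` from head to tail). -/
noncomputable def netStep (D : VoltageDigraph V m) (v w : V) : ZMod m := by
  classical exact if (v, w) ∈ D.A then D.vol (v, w) else - D.vol (w, v)

/-- The net voltage of a walk in the underlying graph: the sum of the signed voltages of
its steps. -/
noncomputable def netVoltage (D : VoltageDigraph V m) {u v : V}
    (w : D.underlying.Walk u v) : ZMod m :=
  (w.darts.map (fun d => D.netStep d.fst d.snd)).sum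

/-- The lift with pinned vertices: the lift graph augmented by one extra vertex for each
pinned vertex `p` (attached to `attach p ∈ V`), adjacent to `(attach p, i)` for every
`i : ZMod m`. -/
def pinnedLift (D : VoltageDigraph V m) {P : Type} (attach : P → V) :
    SimpleGraph ((V × ZMod m) ⊕ P) :=
  SimpleGraph.fromRel (fun a b =>
    (∃ u v : V × ZMod m, a = Sum.inl u ∧ b = Sum.inl v ∧ D.lift.Adj u v) ∨
    (∃ (p : P) (u : V × ZMod m), a = Sum.inr p ∧ b = Sum.inl u ∧ attach p = u.1))

end VoltageDigraph

/-! Write `B` for the net voltage of the cycle. The lollipop lifts to the path that climbs the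
lifted stem from `(x, 0)`, runs once around the lifted cycle, which ends `B ≠ 0` levels above its
start and is therefore a path, and descends the copy of the stem shifted up by `B`. The two copies
of the stem sit at different levels, so they are disjoint, and the pinned vertex, adjacent to both
`(x, 0)` and `(x, B)`, closes this path to a cycle of length `1 + (s - 1) + q + (s - 1) + 1`. -/

namespace SimpleGraph.Walk

variable {W : Type*} {G : SimpleGraph W}

theorem IsPath.append {u v w : W} {p : G.Walk u v} {q : G.Walk v w} (hp : p.IsPath)
    (hq : q.IsPath) (h : ∀ z ∈ p.support, z ∈ q.support → z = v) : (p.append q).IsPath := by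
  rw [isPath_def, support_append]
  have hq' := hq.support_nodup
  rw [← q.cons_tail_support, List.nodup_cons] at hq'
  refine hp.support_nodup.append hq'.2 fun z hz hz' => ?_
  obtain rfl := h z hz (List.mem_of_mem_tail hz')
  exact hq'.1 hz'

theorem IsPath.isCycle_cons_concat {x u w : W} {q : G.Walk u w} (hq : q.IsPath)
    (hx : x ∉ q.support) (hu : G.Adj x u) (hw : G.Adj w x) (huw : u ≠ w) :
    (cons hu (q.concat hw)).IsCycle := by
  refine (cons_isCycle_iff _ hu).2 ⟨hq.concat hx hw, fun he => ?_⟩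
  rw [edges_concat, List.concat_eq_append, List.mem_append, List.mem_singleton] at he
  rcases he with he | he
  · exact hx (q.fst_mem_support_of_mem_edges he)
  · rcases Sym2.eq_iff.1 he with ⟨rfl, -⟩ | ⟨-, rfl⟩
    · exact hx q.end_mem_support
    · exact huw rfl

end SimpleGraph.Walk

namespace VoltageDigraph

open SimpleGraph

variable {V : Type} {m : ℕ} (D : VoltageDigraph V m)

@[simp] lemma netVoltage_nil {u : V} : D.netVoltage (Walk.nil : D.underlying.Walk u u) = 0 := by
  simp [netVoltage]

@[simp] lemma netVoltage_cons {u w v : V} (h : D.underlying.Adj u w)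
    (p : D.underlying.Walk w v) :
    D.netVoltage (Walk.cons h p) = D.netStep u w + D.netVoltage p := by
  simp [netVoltage]

lemma lift_adj_netStep {u w : V} (h : D.underlying.Adj u w) (i : ZMod m) :
    D.lift.Adj (u, i) (w, i + D.netStep u w) := by
  by_cases huw : (u, w) ∈ D.A
  · exact Or.inl ⟨huw, by simp [netStep, huw]⟩
  · exact Or.inr ⟨h.resolve_left huw, by simp [netStep, huw]⟩

noncomputable def liftWalk : ∀ {u v : V} (w : D.underlying.Walk u v) (i : ZMod m),
    D.lift.Walk (u, i) (v, i + D.netVoltage w)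
  | _, _, .nil, _ => Walk.nil.copy rfl (by simp)
  | _, _, .cons h w, i =>
      (Walk.cons (D.lift_adj_netStep h i) (liftWalk w (i + D.netStep _ _))).copy rfl
        (by simp [add_assoc])

variable {D}

@[simp] lemma length_liftWalk {u v : V} (w : D.underlying.Walk u v) (i : ZMod m) :
    (D.liftWalk w i).length = w.length := by
  induction w generalizing i with
  | nil => simp [liftWalk]
  | cons h w ih => simp [liftWalk, ih]

@[simp] lemma support_liftWalk_map_fst {u v : V} (w : D.underlying.Walk u v) (i : ZMod m) :
    (D.liftWalk w i).support.map Prod.fst = w.support := by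
  induction w generalizing i with
  | nil => simp [liftWalk]
  | cons h w ih => simp [liftWalk, ih]

lemma support_liftWalk_add {u v : V} (w : D.underlying.Walk u v) (i j : ZMod m) :
    (D.liftWalk w (i + j)).support = (D.liftWalk w i).support.map fun z => (z.1, z.2 + j) := by
  induction w generalizing i with
  | nil => simp [liftWalk]
  | cons h w ih =>
    simp only [liftWalk, Walk.support_copy, Walk.support_cons, List.map_cons, ← ih]
    rw [add_right_comm]

lemma fst_mem_support_of_mem_support_liftWalk {u v : V} {w : D.underlying.Walk u v}
    {i : ZMod m} {z : V × ZMod m} (hz : z ∈ (D.liftWalk w i).support) : z.1 ∈ w.support := by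
  rw [← support_liftWalk_map_fst w i]
  exact List.mem_map_of_mem hz

lemma isPath_liftWalk {u v : V} {w : D.underlying.Walk u v} (hw : w.IsPath) (i : ZMod m) :
    (D.liftWalk w i).IsPath := by
  rw [Walk.isPath_def]
  apply List.Nodup.of_map Prod.fst
  rw [support_liftWalk_map_fst]
  exact hw.support_nodup

lemma eq_of_mem_support_liftWalk {u v : V} {w : D.underlying.Walk u v} (hw : w.IsPath)
    {i : ZMod m} {z z' : V × ZMod m} (hz : z ∈ (D.liftWalk w i).support)
    (hz' : z' ∈ (D.liftWalk w i).support) (h : z.1 = z'.1) : z = z' :=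
  List.inj_on_of_nodup_map (by simpa using hw.support_nodup) hz hz' h

lemma disjoint_support_liftWalk {u v : V} {w : D.underlying.Walk u v} (hw : w.IsPath)
    {i j : ZMod m} (hij : i ≠ j) :
    (D.liftWalk w i).support.Disjoint (D.liftWalk w j).support := by
  intro z hzi hzj
  rw [show j = i + (j - i) by ring, support_liftWalk_add, List.mem_map] at hzj
  obtain ⟨y, hy, rfl⟩ := hzj
  have hyz := eq_of_mem_support_liftWalk hw hy hzi rfl
  exact hij (sub_eq_zero.1 (by simpa using congrArg Prod.snd hyz)).symm

lemma isPath_liftWalk_of_isCycle {v : V} {c : D.underlying.Walk v v} (hc : c.IsCycle)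
    (hB : D.netVoltage c ≠ 0) (i : ZMod m) : (D.liftWalk c i).IsPath := by
  have htail : ((D.liftWalk c i).support.tail.map Prod.fst).Nodup := by
    rw [List.map_tail, support_liftWalk_map_fst]
    exact hc.support_nodup
  have hne : ((v, i) : V × ZMod m) ≠ (v, i + D.netVoltage c) := by simpa using hB
  rw [Walk.isPath_def, ← Walk.cons_tail_support]
  refine List.nodup_cons.2 ⟨fun hmem => hne ?_, htail.of_map _⟩
  exact List.inj_on_of_nodup_map htail hmem (Walk.end_mem_tail_support_of_ne hne _) rfl

theorem exists_isPath_lift_lollipop {x v : V} {pw : D.underlying.Walk x v} (hpath : pw.IsPath)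
    {cw : D.underlying.Walk v v} (hcyc : cw.IsCycle)
    (hmeet : ∀ u ∈ pw.support, u ∈ cw.support → u = v) (hB : D.netVoltage cw ≠ 0)
    (i : ZMod m) :
    ∃ w : D.lift.Walk (x, i) (x, i + D.netVoltage cw),
      w.IsPath ∧ w.length = 2 * pw.length + cw.length := by
  set a := D.netVoltage pw
  set B := D.netVoltage cw
  let around := D.liftWalk cw (i + a)
  let down := (D.liftWalk pw (i + B)).reverse.copy (by rw [add_right_comm]) rfl
  have hsupport_down : ∀ z, z ∈ down.support ↔ z ∈ (D.liftWalk pw (i + B)).support := by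
    simp [down]
  have hstem_top : ∀ {j : ZMod m} {z : V × ZMod m}, z ∈ (D.liftWalk pw j).support →
      z.1 ∈ cw.support → z = (v, j + a) := fun hz hzc =>
    eq_of_mem_support_liftWalk hpath hz (Walk.end_mem_support _)
      (hmeet _ (fst_mem_support_of_mem_support_liftWalk hz) hzc)
  have hdown : (around.append down).IsPath := by
    have hdown_path : down.IsPath := by simpa [down] using isPath_liftWalk hpath (i + B)
    refine (isPath_liftWalk_of_isCycle hcyc hB _).append hdown_path fun z hz hz' => ?_
    rw [hstem_top ((hsupport_down z).1 hz') (fst_mem_support_of_mem_support_liftWalk hz),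
      add_right_comm]
  refine ⟨(D.liftWalk pw i).append (around.append down),
    (isPath_liftWalk hpath i).append hdown fun z hz hz' => ?_, ?_⟩
  · rcases (Walk.mem_support_append_iff _ _).1 hz' with hz' | hz'
    · exact hstem_top hz (fst_mem_support_of_mem_support_liftWalk hz')
    · exact absurd ((hsupport_down z).1 hz')
        (disjoint_support_liftWalk hpath (by simpa using hB) hz)
  · simp [around, down]
    ring

def liftHomPinnedLift {P : Type} (attach : P → V) : D.lift →g D.pinnedLift attach where
  toFun := Sum.inl
  map_rel' {u v} h :=
    ⟨fun huv => h.ne (Sum.inl.inj huv), Or.inl (Or.inl ⟨u, v, rfl, rfl, h⟩)⟩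

lemma pinnedLift_adj_inr_inl {P : Type} {attach : P → V} {p : P} {u : V × ZMod m}
    (hp : attach p = u.1) : (D.pinnedLift attach).Adj (Sum.inr p) (Sum.inl u) :=
  ⟨Sum.inr_ne_inl, Or.inl (Or.inr ⟨p, u, rfl, rfl, hp⟩)⟩

end VoltageDigraph

open SimpleGraph VoltageDigraph in
theorem statement8_general {V P : Type} {m : ℕ}
    (D : VoltageDigraph V m) (attach : P → V) (p : P) (x : V) (hx : attach p = x)
    (s q : ℕ) (hs : 1 ≤ s) (v : V)
    (pw : D.underlying.Walk x v) (hpath : pw.IsPath) (hplen : pw.length = s - 1)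
    (cw : D.underlying.Walk v v) (hcyc : cw.IsCycle) (hclen : cw.length = q)
    (hmeet : ∀ u ∈ pw.support, u ∈ cw.support → u = v)
    (hB : D.netVoltage cw ≠ 0) :
    ∃ c : (D.pinnedLift attach).Walk (Sum.inr p) (Sum.inr p),
      c.IsCycle ∧ c.length = 2 * s + q := by
  obtain ⟨w, hw, hlen⟩ := exists_isPath_lift_lollipop hpath hcyc hmeet hB 0
  obtain ⟨w', hw', hp_notMem, hlen'⟩ : ∃ w' : (D.pinnedLift attach).Walk (Sum.inl (x, 0))
      (Sum.inl (x, 0 + D.netVoltage cw)),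
      w'.IsPath ∧ Sum.inr p ∉ w'.support ∧ w'.length = w.length :=
    ⟨w.map (liftHomPinnedLift attach), hw.map Sum.inl_injective,
      by simp [Walk.support_map, liftHomPinnedLift], Walk.length_map _ _⟩
  have hends : (Sum.inl (x, 0) : (V × ZMod m) ⊕ P) ≠ Sum.inl (x, 0 + D.netVoltage cw) := by
    simpa using hB.symm
  refine ⟨.cons (pinnedLift_adj_inr_inl hx) (w'.concat (pinnedLift_adj_inr_inl hx).symm),
    hw'.isCycle_cons_concat hp_notMem _ _ hends, ?_⟩
  rw [Walk.length_cons, Walk.length_concat, hlen', hlen, hplen, hclen]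
  omega

/-- lollipop walks. If `p` is a pinned vertex attached to `x`, the underlying
graph contains a path of `s - 1` steps (`s ≥ 1`) from `x` to `v` together with a cycle of
length `q ≥ 3` through `v` meeting the path only at `v`, and the net voltage of the cycle
is nonzero in `ZMod m`, then the lift with pinned vertices contains a cycle of length
`2s + q` passing through `p`. -/
theorem statement8 {V P : Type} [Fintype V] [Fintype P] {m : ℕ} (hm : 2 ≤ m)
    (D : VoltageDigraph V m) (attach : P → V) (p : P) (x : V) (hx : attach p = x)
    (s q : ℕ) (hs : 1 ≤ s) (hq : 3 ≤ q) (v : V)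
    (pw : D.underlying.Walk x v) (hpath : pw.IsPath) (hplen : pw.length = s - 1)
    (cw : D.underlying.Walk v v) (hcyc : cw.IsCycle) (hclen : cw.length = q)
    (hmeet : ∀ u ∈ pw.support, u ∈ cw.support → u = v)
    (hB : D.netVoltage cw ≠ 0) :
    ∃ c : (D.pinnedLift attach).Walk (Sum.inr p) (Sum.inr p),
      c.IsCycle ∧ c.length = 2 * s + q :=
  statement8_general D attach p x hx s q hs v pw hpath hplen cw hcyc hclen hmeet hB
end

section
/- For all integers t ≥ 1 and m ≥ 2, every simple graph on the vertex set of (T_{4t+2}; m) whose edge set contains every edge of (T_{4t+2}; m) has girth at most 4t+2. -/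
/-- `BT t` : bit strings of length at most `2t - 1` that do not have `0^t` as a prefix. -/
def BT (t : ℕ) : Type :=
  {l : List Bool // l.length ≤ 2 * t - 1 ∧ ¬ List.replicate t false <+: l}

/-- Vertex set of `(T_{4t+2}; m)` : the two pinned vertices `x* = Sum.inl true`,
`y* = Sum.inl false`, together with `{x, y} × B_t × ZMod m`, where the side `x` is
encoded by `true` and `y` by `false`. -/
def TVert (t m : ℕ) : Type := Bool ⊕ (Bool × BT t × ZMod m)

/-- The edge relation of `(T_{4t+2}; m)`: the pinned vertex of each side is joined to the
root `(s, ε, i)` for every `i`; each vertex `(s, b, i)` is joined to its children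
`(s, bc, i)`; and `(x, a, i)` is joined to `(y, a, i)` where `a = 0^{t-1}`. -/
def TRel (t m : ℕ) : TVert t m → TVert t m → Prop := fun a b =>
  (∃ (s : Bool) (l : BT t) (i : ZMod m),
      a = Sum.inl s ∧ b = Sum.inr (s, l, i) ∧ l.val = []) ∨
  (∃ (s : Bool) (l l' : BT t) (i : ZMod m) (c : Bool),
      a = Sum.inr (s, l, i) ∧ b = Sum.inr (s, l', i) ∧ l'.val = l.val ++ [c]) ∨
  (∃ (l l' : BT t) (i : ZMod m),
      a = Sum.inr (true, l, i) ∧ b = Sum.inr (false, l', i) ∧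
      l.val = List.replicate (t - 1) false ∧ l'.val = List.replicate (t - 1) false)

/-- The graph `(T_{4t+2}; m)`. -/
def Tgraph (t m : ℕ) : SimpleGraph (TVert t m) := SimpleGraph.fromRel (TRel t m)

/-!
For `i ≠ j` the paths `x* – (x,ε,i) – ⋯ – (x,a,i) – (y,a,i) – ⋯ – (y,ε,i) – y*` of length
`2t + 1` through the copies `i` and `j` meet only in `x*` and `y*`, so together they form a
cycle of length `4t + 2` in `(T_{4t+2}; m)`, hence in every supergraph.
-/

theorem SimpleGraph.Walk.IsPath.start_notMem_support_tail {V : Type*} {G : SimpleGraph V}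
    {u v : V} {p : G.Walk u v} (hp : p.IsPath) : u ∉ p.support.tail :=
  (List.nodup_cons.1 (p.cons_tail_support ▸ hp.support_nodup)).1

namespace Tgraph

open SimpleGraph Walk

variable {t m : ℕ}

def zeroString (k : ℕ) (hk : k < t) : BT t :=
  ⟨List.replicate k false, by
    refine ⟨by simp only [List.length_replicate]; omega, fun h => ?_⟩
    have := h.length_le
    simp only [List.length_replicate] at this
    omega⟩

def star (s : Bool) : TVert t m := Sum.inl s

def spine (s : Bool) (i : ZMod m) (k : ℕ) (hk : k < t) : TVert t m :=
  Sum.inr (s, zeroString k hk, i)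

@[simp]
theorem star_inj {s s' : Bool} : (star s : TVert t m) = star s' ↔ s = s' := by
  simp [star, TVert]

@[simp]
theorem star_ne_spine {s s' : Bool} {i : ZMod m} {k : ℕ} {hk : k < t} :
    star s ≠ spine s' i k hk :=
  Sum.inl_ne_inr

@[simp]
theorem spine_ne_star {s s' : Bool} {i : ZMod m} {k : ℕ} {hk : k < t} :
    spine s' i k hk ≠ star s :=
  Sum.inr_ne_inl

@[simp]
theorem spine_inj {s s' : Bool} {i i' : ZMod m} {k k' : ℕ} {hk : k < t} {hk' : k' < t} :
    spine s i k hk = spine s' i' k' hk' ↔ s = s' ∧ k = k' ∧ i = i' := by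
  simp [spine, zeroString, TVert, BT]

theorem adj_of_rel {a b : TVert t m} (hne : a ≠ b) (h : TRel t m a b) : (Tgraph t m).Adj a b :=
  (SimpleGraph.fromRel_adj _ _ _).2 ⟨hne, Or.inl h⟩

theorem adj_star_spine_zero (s : Bool) (i : ZMod m) (h : 0 < t) :
    (Tgraph t m).Adj (star s) (spine s i 0 h) :=
  adj_of_rel star_ne_spine (Or.inl ⟨s, zeroString 0 h, i, rfl, rfl, rfl⟩)

theorem adj_spine_succ (s : Bool) (i : ZMod m) {k : ℕ} (hk : k + 1 < t) :
    (Tgraph t m).Adj (spine s i k (by omega)) (spine s i (k + 1) hk) :=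
  adj_of_rel (by simp) (Or.inr (Or.inl ⟨s, _, _, i, false, rfl, rfl, List.replicate_succ' ..⟩))

theorem adj_rung (i : ZMod m) (ht : 0 < t) :
    (Tgraph t m).Adj (spine true i (t - 1) (by omega)) (spine false i (t - 1) (by omega)) :=
  adj_of_rel (by simp) (Or.inr (Or.inr ⟨_, _, i, rfl, rfl, rfl, rfl⟩))

def ascent (s : Bool) (i : ZMod m) : (k : ℕ) → (hk : k < t) →
    (Tgraph t m).Walk (spine s i k hk) (star s)
  | 0, h => cons (adj_star_spine_zero s i h).symm nil
  | k + 1, h => cons (adj_spine_succ s i h).symm (ascent s i k (by omega))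

@[simp]
theorem length_ascent (s : Bool) (i : ZMod m) (k : ℕ) (hk : k < t) :
    (ascent s i k hk).length = k + 1 := by
  induction k with
  | zero => rfl
  | succ k ih => rw [ascent, length_cons, ih]

theorem mem_support_ascent {s : Bool} {i : ZMod m} {k : ℕ} {hk : k < t} {v : TVert t m}
    (hv : v ∈ (ascent s i k hk).support) :
    v = star s ∨ ∃ (j : ℕ) (hj : j < t), j ≤ k ∧ v = spine s i j hj := by
  induction k with
  | zero =>
    simp only [ascent, support_cons, support_nil, List.mem_cons, List.not_mem_nil, or_false] at hv
    obtain rfl | rfl := hv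
    · exact Or.inr ⟨0, hk, le_rfl, rfl⟩
    · exact Or.inl rfl
  | succ k ih =>
    rw [ascent, support_cons, List.mem_cons] at hv
    obtain rfl | hv := hv
    · exact Or.inr ⟨k + 1, hk, le_rfl, rfl⟩
    · obtain h | ⟨j, hj, hjk, rfl⟩ := ih hv
      · exact Or.inl h
      · exact Or.inr ⟨j, hj, by omega, rfl⟩

theorem isPath_ascent (s : Bool) (i : ZMod m) (k : ℕ) (hk : k < t) :
    (ascent s i k hk).IsPath := by
  induction k with
  | zero => exact IsPath.nil.cons (by simp)
  | succ k ih =>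
    refine (ih (by omega)).cons fun hmem => ?_
    obtain h | ⟨j, hj, hjk, h⟩ := mem_support_ascent hmem
    · exact spine_ne_star h
    · rw [spine_inj] at h
      omega

def crossing (i : ZMod m) (ht : 0 < t) : (Tgraph t m).Walk (star true) (star false) :=
  (ascent true i (t - 1) (by omega)).reverse.append (cons (adj_rung i ht) (ascent false i _ _))

@[simp]
theorem length_crossing (i : ZMod m) (ht : 0 < t) : (crossing i ht).length = 2 * t + 1 := by
  rw [crossing, length_append, length_reverse, length_cons, length_ascent, length_ascent]
  omega

theorem mem_support_crossing {i : ZMod m} {ht : 0 < t} {v : TVert t m}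
    (hv : v ∈ (crossing i ht).support) :
    v = star true ∨ v = star false ∨ ∃ (s : Bool) (k : ℕ) (hk : k < t), v = spine s i k hk := by
  rw [crossing, mem_support_append_iff, support_reverse, List.mem_reverse, support_cons,
    List.mem_cons] at hv
  obtain hv | rfl | hv := hv
  · obtain h | ⟨j, hj, -, rfl⟩ := mem_support_ascent hv
    exacts [Or.inl h, Or.inr (Or.inr ⟨_, _, _, rfl⟩)]
  · exact Or.inr (Or.inr ⟨_, _, _, rfl⟩)
  · obtain h | ⟨j, hj, -, rfl⟩ := mem_support_ascent hv
    exacts [Or.inr (Or.inl h), Or.inr (Or.inr ⟨_, _, _, rfl⟩)]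

theorem isPath_crossing (i : ZMod m) (ht : 0 < t) : (crossing i ht).IsPath := by
  rw [isPath_def, crossing, support_append, support_reverse, support_cons, List.tail_cons,
    List.nodup_append, List.nodup_reverse]
  refine ⟨(isPath_ascent ..).support_nodup, (isPath_ascent ..).support_nodup, ?_⟩
  rintro a ha b hb rfl
  rw [List.mem_reverse] at ha
  obtain h | ⟨j, hj, -, rfl⟩ := mem_support_ascent ha <;>
    obtain h' | ⟨j', hj', -, h'⟩ := mem_support_ascent hb <;>
    simp_all

theorem isCycle_crossing_append_reverse {i j : ZMod m} (hij : i ≠ j) (ht : 0 < t) :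
    ((crossing i ht).append (crossing j ht).reverse).IsCycle := by
  have hp := isPath_crossing i ht
  have hq := (isPath_crossing j ht).reverse
  refine hp.isCycle_append hq (fun v hvp hvq => ?_) (by simp; omega)
  have hvj := mem_support_crossing <|
    List.mem_reverse.1 (support_reverse _ ▸ List.mem_of_mem_tail hvq)
  obtain rfl | rfl | ⟨s, k, hk, rfl⟩ := mem_support_crossing (List.mem_of_mem_tail hvp)
  · exact hp.start_notMem_support_tail hvp
  · exact hq.start_notMem_support_tail hvq
  · simp [hij] at hvj

theorem egirth_le (ht : 0 < t) (hm : 2 ≤ m) : (Tgraph t m).egirth ≤ ((4 * t + 2 : ℕ) : ℕ∞) := by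
  have : Fact (1 < m) := ⟨hm⟩
  have hcyc := isCycle_crossing_append_reverse (zero_ne_one (α := ZMod m)) ht
  refine (egirth_le_length hcyc).trans_eq ?_
  simp only [length_append, length_reverse, length_crossing]
  congr 1
  ring

end Tgraph

/-- for all integers `t ≥ 1` and `m ≥ 2`, every simple graph on the vertex
set of `(T_{4t+2}; m)` whose edge set contains every edge of `(T_{4t+2}; m)` has girth at
most `4t + 2`. -/
theorem statement10 (t m : ℕ) (ht : 1 ≤ t) (hm : 2 ≤ m)
    (H : SimpleGraph (TVert t m)) (hle : Tgraph t m ≤ H) :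
    H.egirth ≤ ((4 * t + 2 : ℕ) : ℕ∞) :=
  (SimpleGraph.egirth_anti hle).trans (Tgraph.egirth_le ht hm)
end

section
/- For all integers t ≥ 2 and m ≥ 2, the girth of the graph (T_{4t}; m) equals 4t. -/
/-!
Apart from the cross edges `(x, a, k) – (y, a', k)` and `(x, a, k) – (z, a', k)`, every edge
joins a vertex to its parent, one level closer to a star. At the deepest vertex of a cycle both
cycle neighbours lie one level up, so that vertex is a tip `(x, a, k)` and the cycle uses a cross
edge, say into the `y`-branch. The cycle has to leave the `y`-branch again, through the cross edge
of a different copy `k₂ ≠ k₁`. A 1-Lipschitz potential vanishing at `(x, a, k₁)` and equal to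
`2t` at `(x, a, k₂)` then forces both arcs of the cycle between these two tips to have length at
least `2t`.

Conversely `x* → (x, a, 0) → (y, a', 0) → y* → (y, a', 1) → (x, a, 1) → x*` along the zero
paths has length `4t`, and its position function increases by one at every step, so it is a
path closed up by one edge, i.e. a cycle.
-/

/-- `BX t` : bit strings of length at most `2t - 2` that do not have `0^{t-1}` as a
proper prefix (so `0^{t-1}` itself is allowed, but none of its proper extensions is). -/
def BX (t : ℕ) : Type :=
  {l : List Bool // l.length ≤ 2 * t - 2 ∧
    ¬ (List.replicate (t - 1) false <+: l ∧ List.replicate (t - 1) false ≠ l)}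

/-- `CY t` : bit strings of length at most `2t - 3` that do not have `0^{t-1}` as a
prefix. -/
def CY (t : ℕ) : Type :=
  {l : List Bool // l.length ≤ 2 * t - 3 ∧ ¬ List.replicate (t - 1) false <+: l}

/-- Vertex set of `(T_{4t}; m)` : the three pinned vertices `x* = Sum.inl 0`,
`y* = Sum.inl 1`, `z* = Sum.inl 2`, together with `(({x} × B'_t) ∪ ({y,z} × C_t)) × ZMod m`,
where the `x`-part is `Sum.inl`-labelled and the `y`/`z`-parts are `Sum.inr`-labelled with
`y` encoded by `true` and `z` by `false`. -/
def T4Vert (t m : ℕ) : Type := Fin 3 ⊕ ((BX t ⊕ Bool × CY t) × ZMod m)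

/-- The edge relation of `(T_{4t}; m)`: each pinned vertex is joined to the corresponding
root; tree edges join each vertex to its children within each of the three trees; and
`(x, 0^{t-1}, i)` is joined to `(y, 0^{t-2}, i)` and to `(z, 0^{t-2}, i)`. -/
def T4Rel (t m : ℕ) : T4Vert t m → T4Vert t m → Prop := fun a b =>
  (∃ (l : BX t) (i : ZMod m),
      a = Sum.inl 0 ∧ b = Sum.inr (Sum.inl l, i) ∧ l.val = []) ∨
  (∃ (l : CY t) (i : ZMod m),
      a = Sum.inl 1 ∧ b = Sum.inr (Sum.inr (true, l), i) ∧ l.val = []) ∨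
  (∃ (l : CY t) (i : ZMod m),
      a = Sum.inl 2 ∧ b = Sum.inr (Sum.inr (false, l), i) ∧ l.val = []) ∨
  (∃ (l l' : BX t) (i : ZMod m) (c : Bool),
      a = Sum.inr (Sum.inl l, i) ∧ b = Sum.inr (Sum.inl l', i) ∧ l'.val = l.val ++ [c]) ∨
  (∃ (s : Bool) (l l' : CY t) (i : ZMod m) (c : Bool),
      a = Sum.inr (Sum.inr (s, l), i) ∧ b = Sum.inr (Sum.inr (s, l'), i) ∧
      l'.val = l.val ++ [c]) ∨
  (∃ (s : Bool) (l : BX t) (l' : CY t) (i : ZMod m),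
      a = Sum.inr (Sum.inl l, i) ∧ b = Sum.inr (Sum.inr (s, l'), i) ∧
      l.val = List.replicate (t - 1) false ∧ l'.val = List.replicate (t - 2) false)

/-- The graph `(T_{4t}; m)`. -/
def T4graph (t m : ℕ) : SimpleGraph (T4Vert t m) := SimpleGraph.fromRel (T4Rel t m)

open SimpleGraph

namespace SimpleGraph.Walk

variable {V : Type*} {G : SimpleGraph V}

theorem abs_sub_le_length {f : V → ℤ} (hf : ∀ u v, G.Adj u v → |f u - f v| ≤ 1) :
    ∀ {u v : V} (p : G.Walk u v), |f u - f v| ≤ p.length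
  | _, _, nil => by simp
  | u, w, cons (v := v) h p => by
    have hp := abs_sub_le_length hf p
    have := hf u v h
    have := abs_sub_le (f u) (f v) (f w)
    rw [length_cons]
    push_cast
    linarith

theorem two_mul_abs_sub_le_length {f : V → ℤ} (hf : ∀ u v, G.Adj u v → |f u - f v| ≤ 1)
    {a u v : V} (c : G.Walk a a) (hu : u ∈ c.support) (hv : v ∈ c.support) :
    2 * |f u - f v| ≤ c.length := by
  classical
  have hv' : v ∈ (c.rotate u hu).support := (mem_support_rotate_iff _ _ hu).mpr hv
  have hlen := congrArg length ((c.rotate u hu).take_spec hv')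
  rw [length_append, length_rotate] at hlen
  have h₁ := abs_sub_le_length hf ((c.rotate u hu).takeUntil v hv')
  have h₂ := abs_sub_le_length hf ((c.rotate u hu).dropUntil v hv')
  rw [abs_sub_comm] at h₂
  rw [← hlen]
  push_cast
  linarith

theorem IsTrail.exists_darts_across {a : V} {c : G.Walk a a} (hc : c.IsTrail) (S : Set V)
    {u v : V} (hu : u ∈ c.support) (huS : u ∉ S) (hv : v ∈ c.support) (hvS : v ∈ S) :
    ∃ d₁ ∈ c.darts, ∃ d₂ ∈ c.darts,
      d₁.fst ∉ S ∧ d₁.snd ∈ S ∧ d₂.fst ∈ S ∧ d₂.snd ∉ S ∧ d₁.edge ≠ d₂.edge := by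
  classical
  have hv' : v ∈ (c.rotate u hu).support := (mem_support_rotate_iff _ _ hu).mpr hv
  set p := (c.rotate u hu).takeUntil v hv'
  set q := (c.rotate u hu).dropUntil v hv'
  have hpq : p.append q = c.rotate u hu := (c.rotate u hu).take_spec hv'
  obtain ⟨d₁, hd₁, hd₁S⟩ := p.exists_boundary_dart Sᶜ huS (by simpa using hvS)
  obtain ⟨d₂, hd₂, hd₂S⟩ := q.exists_boundary_dart S hvS huS
  have hdarts : ∀ d, d ∈ p.darts ∨ d ∈ q.darts → d ∈ c.darts := fun d hd =>
    (rotate_darts c u hu).mem_iff.mp (by rw [← hpq, darts_append]; exact List.mem_append.mpr hd)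
  have hdisj : ∀ e ∈ p.edges, e ∉ q.edges := by
    have := (hc.rotate hu).edges_nodup
    rw [← hpq, edges_append, List.nodup_append] at this
    exact fun e he he' => this.2.2 e he e he' rfl
  refine ⟨d₁, hdarts _ (.inl hd₁), d₂, hdarts _ (.inr hd₂), hd₁S.1, not_not.mp hd₁S.2, hd₂S.1,
    hd₂S.2, fun he => hdisj _ (List.mem_map_of_mem hd₁) ?_⟩
  rw [he]
  exact List.mem_map_of_mem hd₂

theorem IsCycle.exists_adj_adj_le {β : Type*} [LinearOrder β] (f : V → β) {a : V}
    {c : G.Walk a a} (hc : c.IsCycle) :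
    ∃ x ∈ c.support, ∃ y ∈ c.support, ∃ z ∈ c.support,
      y ≠ z ∧ G.Adj x y ∧ G.Adj x z ∧ f y ≤ f x ∧ f z ≤ f x := by
  classical
  obtain ⟨x, hx, hmax⟩ := c.support.toFinset.exists_max_image f ⟨a, by simp⟩
  rw [List.mem_toFinset] at hx
  have hc' := hc.rotate hx
  have hmem : ∀ i, (c.rotate x hx).getVert i ∈ c.support := fun i =>
    (mem_support_rotate_iff _ _ hx).mp (getVert_mem_support _ i)
  exact ⟨x, hx, _, hmem 1, _, hmem _, hc'.snd_ne_penultimate, adj_snd hc'.not_nil,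
    (adj_penultimate hc'.not_nil).symm, hmax _ (List.mem_toFinset.mpr (hmem 1)),
    hmax _ (List.mem_toFinset.mpr (hmem _))⟩

def ofChain (f : ℕ → V) : (n : ℕ) → (∀ j < n, G.Adj (f j) (f (j + 1))) → G.Walk (f 0) (f n)
  | 0, _ => nil
  | n + 1, h => (ofChain f n fun j hj => h j (by omega)).concat (h n (by omega))

@[simp]
theorem length_ofChain (f : ℕ → V) :
    ∀ (n : ℕ) (h : ∀ j < n, G.Adj (f j) (f (j + 1))), (ofChain f n h).length = n
  | 0, _ => rfl
  | n + 1, h => by rw [ofChain, length_concat, length_ofChain]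

theorem mem_darts_ofChain (f : ℕ → V) :
    ∀ (n : ℕ) (h : ∀ j < n, G.Adj (f j) (f (j + 1))) {d : G.Dart}, d ∈ (ofChain f n h).darts →
      ∃ j < n, d.fst = f j ∧ d.snd = f (j + 1)
  | 0, _, _, hd => by simp [ofChain] at hd
  | n + 1, h, d, hd => by
    rw [ofChain, darts_concat, List.concat_eq_append, List.mem_append, List.mem_singleton] at hd
    rcases hd with hd | rfl
    · obtain ⟨j, hj, hd⟩ := mem_darts_ofChain f n _ hd
      exact ⟨j, by omega, hd⟩
    · exact ⟨n, by omega, rfl, rfl⟩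

def Rising (φ : V → ℤ) {u v : V} (p : G.Walk u v) : Prop :=
  ∀ d ∈ p.darts, φ d.snd = φ d.fst + 1

variable {φ : V → ℤ}

theorem Rising.cons {u v w : V} {p : G.Walk v w} (h : G.Adj u v) (hφ : φ v = φ u + 1)
    (hp : Rising φ p) : Rising φ (cons h p) := by
  intro d hd
  rcases List.mem_cons.mp hd with rfl | hd
  exacts [hφ, hp d hd]

theorem Rising.append {u v w : V} {p : G.Walk u v} {q : G.Walk v w} (hp : Rising φ p)
    (hq : Rising φ q) : Rising φ (p.append q) := by
  intro d hd
  rcases List.mem_append.mp (darts_append p q ▸ hd) with hd | hd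
  exacts [hp d hd, hq d hd]

theorem rising_ofChain (f : ℕ → V) {n : ℕ} (h : ∀ j < n, G.Adj (f j) (f (j + 1)))
    (hφ : ∀ j < n, φ (f (j + 1)) = φ (f j) + 1) : Rising φ (ofChain f n h) := by
  intro d hd
  obtain ⟨j, hj, h₁, h₂⟩ := mem_darts_ofChain f n h hd
  rw [h₁, h₂, hφ j hj]

theorem rising_reverse_ofChain (f : ℕ → V) {n : ℕ} (h : ∀ j < n, G.Adj (f j) (f (j + 1)))
    (hφ : ∀ j < n, φ (f j) = φ (f (j + 1)) + 1) : Rising φ (ofChain f n h).reverse := by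
  intro d hd
  rw [darts_reverse, List.mem_reverse, List.mem_map] at hd
  obtain ⟨d, hd, rfl⟩ := hd
  obtain ⟨j, hj, h₁, h₂⟩ := mem_darts_ofChain f n h hd
  simp only [Dart.symm_toProd, Prod.snd_swap, Prod.fst_swap, h₁, h₂, hφ j hj]

theorem Rising.le_of_mem_support {u v : V} {p : G.Walk u v} (hp : Rising φ p) {x : V}
    (hx : x ∈ p.support) : φ u ≤ φ x := by
  induction p with
  | nil => rw [mem_support_nil_iff.mp hx]
  | cons h q ih =>
    rw [support_cons, List.mem_cons] at hx
    rcases hx with rfl | hx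
    · rfl
    · linarith [hp _ List.mem_cons_self, ih (fun d hd => hp d (List.mem_cons_of_mem _ hd)) hx]

theorem Rising.isPath {u v : V} {p : G.Walk u v} (hp : Rising φ p) : p.IsPath := by
  induction p with
  | nil => exact .nil
  | cons h q ih =>
    have hq : Rising φ q := fun d hd => hp d (List.mem_cons_of_mem _ hd)
    refine (cons_isPath_iff h q).mpr ⟨ih hq, fun hu => ?_⟩
    have := hq.le_of_mem_support hu
    have := hp _ List.mem_cons_self
    simp_all

theorem Rising.isCycle_cons {u v : V} {p : G.Walk u v} (hp : Rising φ p) (h : G.Adj v u)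
    (huv : φ u + 1 < φ v) : (Walk.cons h p).IsCycle := by
  refine (cons_isCycle_iff p h).mpr ⟨hp.isPath, fun he => ?_⟩
  obtain ⟨d, hd, hde⟩ := List.mem_map.mp he
  have hstep := hp d hd
  rcases Sym2.eq_iff.mp hde with ⟨h₁, h₂⟩ | ⟨h₁, h₂⟩ <;> rw [h₁, h₂] at hstep <;> omega

end SimpleGraph.Walk

namespace T4graph

variable {t m : ℕ}

-- `min` clips the depth, so that the zero-path vertices need no bound on `n`.
def xZeros (t n : ℕ) : BX t :=
  ⟨List.replicate (min n (t - 1)) false, by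
    refine ⟨by simp only [List.length_replicate]; omega, fun ⟨hp, hne⟩ => hne ?_⟩
    have := hp.length_le
    simp only [List.length_replicate] at this
    rw [show min n (t - 1) = t - 1 by omega]⟩

def yzZeros (ht : 2 ≤ t) (n : ℕ) : CY t :=
  ⟨List.replicate (min n (t - 2)) false, by
    refine ⟨by simp only [List.length_replicate]; omega, fun hp => ?_⟩
    have := hp.length_le
    simp only [List.length_replicate] at this
    omega⟩

def xVert (t n : ℕ) (k : ZMod m) : T4Vert t m := .inr (.inl (xZeros t n), k)

def yzVert (ht : 2 ≤ t) (s : Bool) (n : ℕ) (k : ZMod m) : T4Vert t m :=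
  .inr (.inr (s, yzZeros ht n), k)

theorem eq_xVert_of_val_eq {l : BX t} (hl : l.val = List.replicate (t - 1) false) (k : ZMod m) :
    (.inr (.inl l, k) : T4Vert t m) = xVert t (t - 1) k := by
  rw [xVert, show l = xZeros t (t - 1) from Subtype.ext (by simp [xZeros, hl])]

theorem eq_yzVert_of_val_eq (ht : 2 ≤ t) {l : CY t} (hl : l.val = List.replicate (t - 2) false)
    (s : Bool) (k : ZMod m) :
    (.inr (.inr (s, l), k) : T4Vert t m) = yzVert ht s (t - 2) k := by
  rw [yzVert, show l = yzZeros ht (t - 2) from Subtype.ext (by simp [yzZeros, hl])]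

def BX.dropLast (b : BX t) : BX t :=
  ⟨b.val.dropLast, by
    obtain ⟨hlen, hb⟩ := b.property
    refine ⟨by simp only [List.length_dropLast]; omega, fun ⟨hp, hne⟩ =>
      hb ⟨hp.trans (List.dropLast_prefix _), fun he => hne (hp.eq_of_length ?_)⟩⟩
    have := hp.length_le
    simp only [List.length_dropLast, ← he, List.length_replicate] at this ⊢
    omega⟩

def CY.dropLast (e : CY t) : CY t :=
  ⟨e.val.dropLast, by
    obtain ⟨hlen, he⟩ := e.property
    exact ⟨by simp only [List.length_dropLast]; omega,
      fun hp => he (hp.trans (List.dropLast_prefix _))⟩⟩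

def depth : T4Vert t m → ℕ
  | .inl _ => 0
  | .inr (.inl b, _) => b.val.length + 1
  | .inr (.inr (_, e), _) => e.val.length + 1

def parent : T4Vert t m → T4Vert t m
  | .inl j => .inl j
  | .inr (.inl b, k) => if b.val = [] then .inl 0 else .inr (.inl (BX.dropLast b), k)
  | .inr (.inr (s, e), k) =>
    if e.val = [] then .inl (if s then 1 else 2) else .inr (.inr (s, CY.dropLast e), k)

theorem rel_cases (ht : 2 ≤ t) {u v : T4Vert t m} (h : T4Rel t m u v) :
    (u = parent v ∧ depth v = depth u + 1) ∨
      ∃ s k, u = xVert t (t - 1) k ∧ v = yzVert ht s (t - 2) k := by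
  rcases h with ⟨l, k, rfl, rfl, hl⟩ | ⟨l, k, rfl, rfl, hl⟩ | ⟨l, k, rfl, rfl, hl⟩ |
    ⟨l, l', k, c, rfl, rfl, hl⟩ | ⟨s, l, l', k, c, rfl, rfl, hl⟩ | ⟨s, l, l', k, rfl, rfl, hl, hl'⟩
  · exact .inl ⟨(if_pos hl).symm, by simp [depth, hl]⟩
  · exact .inl ⟨(if_pos hl).symm, by simp [depth, hl]⟩
  · exact .inl ⟨(if_pos hl).symm, by simp [depth, hl]⟩
  · have hp : BX.dropLast l' = l := Subtype.ext (by simp [BX.dropLast, hl])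
    exact .inl ⟨by rw [← hp]; exact (if_neg (by simp [hl])).symm, by simp [depth, hl]⟩
  · have hp : CY.dropLast l' = l := Subtype.ext (by simp [CY.dropLast, hl])
    exact .inl ⟨by rw [← hp]; exact (if_neg (by simp [hl])).symm, by simp [depth, hl]⟩
  · exact .inr ⟨s, k, eq_xVert_of_val_eq hl k, eq_yzVert_of_val_eq ht hl' s k⟩

@[simp]
theorem depth_xVert (n : ℕ) (k : ZMod m) : depth (xVert t n k) = min n (t - 1) + 1 := by
  simp [depth, xVert, xZeros]

@[simp]
theorem depth_yzVert (ht : 2 ≤ t) (s : Bool) (n : ℕ) (k : ZMod m) :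
    depth (yzVert ht s n k) = min n (t - 2) + 1 := by
  simp [depth, yzVert, yzZeros]

theorem eq_parent_or_cross_of_adj (ht : 2 ≤ t) {u v : T4Vert t m} (h : (T4graph t m).Adj u v)
    (hd : depth v ≤ depth u) :
    v = parent u ∨ ∃ s k, u = xVert t (t - 1) k ∧ v = yzVert ht s (t - 2) k := by
  rcases ((fromRel_adj _ _ _).mp h).2 with h | h <;>
    rcases rel_cases ht h with ⟨hp, hd'⟩ | ⟨s, k, rfl, rfl⟩
  · omega
  · exact .inr ⟨s, k, rfl, rfl⟩
  · exact .inl hp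
  · simp only [depth_xVert, depth_yzVert] at hd
    omega

theorem exists_cross_mem_support (ht : 2 ≤ t) {a : T4Vert t m} {c : (T4graph t m).Walk a a}
    (hc : c.IsCycle) :
    ∃ s k, xVert t (t - 1) k ∈ c.support ∧ yzVert ht s (t - 2) k ∈ c.support := by
  obtain ⟨x, hx, y, hy, z, hz, hyz, hxy, hxz, hyx, hzx⟩ := hc.exists_adj_adj_le depth
  rcases eq_parent_or_cross_of_adj ht hxy hyx with rfl | ⟨s, k, rfl, rfl⟩
  · rcases eq_parent_or_cross_of_adj ht hxz hzx with rfl | ⟨s, k, rfl, rfl⟩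
    · exact absurd rfl hyz
    · exact ⟨s, k, hx, hz⟩
  · exact ⟨s, k, hx, hy⟩

def side (s : Bool) : T4Vert t m → Prop
  | .inl j => j = if s then 1 else 2
  | .inr (.inl _, _) => False
  | .inr (.inr (s', _), _) => s' = s

theorem side_parent_iff {s : Bool} {v : T4Vert t m} : side s (parent v) ↔ side s v := by
  rcases v with j | ⟨b | ⟨s', e⟩, k⟩
  · rfl
  · by_cases hb : b.val = [] <;> cases s <;> simp [parent, side, hb]
  · by_cases he : e.val = [] <;> cases s <;> cases s' <;> simp [parent, side, he]

theorem not_side_xVert (s : Bool) (n : ℕ) (k : ZMod m) : ¬ side s (xVert t n k) := id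

theorem side_yzVert (ht : 2 ≤ t) (s : Bool) (n : ℕ) (k : ZMod m) :
    side s (yzVert ht s n k) := rfl

theorem cross_of_adj_of_not_side (ht : 2 ≤ t) {s : Bool} {u v : T4Vert t m}
    (h : (T4graph t m).Adj u v) (hu : ¬ side s u) (hv : side s v) :
    ∃ k, u = xVert t (t - 1) k ∧ v = yzVert ht s (t - 2) k := by
  have key {a b : T4Vert t m} (hab : T4Rel t m a b) :
      (side s a ↔ side s b) ∨ ∃ k, a = xVert t (t - 1) k ∧ b = yzVert ht s (t - 2) k := by
    rcases rel_cases ht hab with ⟨rfl, -⟩ | ⟨s', k, rfl, rfl⟩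
    · exact .inl side_parent_iff
    · by_cases hs : s' = s
      · exact .inr ⟨k, rfl, hs ▸ rfl⟩
      · exact .inl (iff_of_false (not_side_xVert _ _ _) hs)
  rcases ((fromRel_adj _ _ _).mp h).2 with h | h <;> rcases key h with hiff | ⟨k, rfl, rfl⟩
  · exact absurd (hiff.mpr hv) hu
  · exact ⟨k, rfl, rfl⟩
  · exact absurd (hiff.mp hv) hu
  · exact absurd hv (not_side_xVert _ _ _)

def leadingFalses (l : List Bool) : ℕ := (l.takeWhile (! ·)).length

theorem leadingFalses_concat (l : List Bool) (c : Bool) :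
    leadingFalses (l ++ [c]) = leadingFalses l ∨
      leadingFalses (l ++ [c]) = leadingFalses l + 1 := by
  unfold leadingFalses
  rw [List.takeWhile_append]
  split_ifs with h
  · cases c <;> simp [h]
  · exact .inl rfl

@[simp]
theorem leadingFalses_replicate (n : ℕ) : leadingFalses (List.replicate n false) = n := by
  simp [leadingFalses]

def listPot (t bound : ℕ) (near : Bool) (l : List Bool) : ℤ :=
  if near then (t - 1 : ℕ) + l.length - 2 * (min (leadingFalses l) bound : ℕ)
  else t + 1 + l.length

theorem abs_sub_listPot_nil_le (t bound : ℕ) (near : Bool) :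
    |(t : ℤ) - listPot t bound near []| ≤ 1 := by
  cases near <;> simp [listPot, leadingFalses, abs_le]
  omega

theorem abs_listPot_sub_listPot_concat_le (t bound : ℕ) (near : Bool) (l : List Bool)
    (c : Bool) : |listPot t bound near l - listPot t bound near (l ++ [c])| ≤ 1 := by
  rcases leadingFalses_concat l c with h | h <;> cases near <;> simp [listPot, h, abs_le]
  all_goals omega

/- `pot i v` is the length of the obvious route from `(x, a, i)` to `v`: inside copy `i` along
the trees (`listPot t _ true`), to any other copy through a star (`listPot t _ false`). -/
def pot (i : ZMod m) : T4Vert t m → ℤ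
  | .inl _ => t
  | .inr (.inl b, k) => listPot t (t - 1) (k = i) b.val
  | .inr (.inr (_, e), k) => listPot t (t - 2) (k = i) e.val

theorem abs_pot_parent_sub_le (i : ZMod m) (v : T4Vert t m) :
    |pot i (parent v) - pot i v| ≤ 1 := by
  rcases v with j | ⟨b | ⟨s, e⟩, k⟩
  · simp [parent]
  · by_cases hb : b.val = []
    · simpa [parent, pot, hb] using abs_sub_listPot_nil_le t (t - 1) (k = i)
    · obtain ⟨l, c, hlc⟩ : ∃ l c, b.val = l ++ [c] :=
        ⟨_, _, (List.dropLast_append_getLast hb).symm⟩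
      simpa [parent, pot, hb, BX.dropLast, hlc] using
        abs_listPot_sub_listPot_concat_le t (t - 1) (k = i) l c
  · by_cases he : e.val = []
    · simpa [parent, pot, he] using abs_sub_listPot_nil_le t (t - 2) (k = i)
    · obtain ⟨l, c, hlc⟩ : ∃ l c, e.val = l ++ [c] :=
        ⟨_, _, (List.dropLast_append_getLast he).symm⟩
      simpa [parent, pot, he, CY.dropLast, hlc] using
        abs_listPot_sub_listPot_concat_le t (t - 2) (k = i) l c

theorem pot_xVert_self (i : ZMod m) : pot i (xVert t (t - 1) i) = 0 := by
  simp only [pot, xVert, xZeros, min_self, listPot, decide_true, ↓reduceIte,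
    List.length_replicate, leadingFalses_replicate]
  ring

theorem pot_xVert_of_ne (ht : 1 ≤ t) {i k : ZMod m} (hk : k ≠ i) :
    pot i (xVert t (t - 1) k) = 2 * t := by
  simp only [pot, xVert, xZeros, min_self, listPot, hk, decide_false, Bool.false_eq_true,
    ↓reduceIte, List.length_replicate]
  omega

theorem abs_pot_sub_le_of_adj (ht : 2 ≤ t) (i : ZMod m) (u v : T4Vert t m)
    (h : (T4graph t m).Adj u v) : |pot i u - pot i v| ≤ 1 := by
  have key {a b : T4Vert t m} (hab : T4Rel t m a b) : |pot i a - pot i b| ≤ 1 := by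
    rcases rel_cases ht hab with ⟨rfl, -⟩ | ⟨s, k, rfl, rfl⟩
    · exact abs_pot_parent_sub_le i b
    · by_cases hk : k = i <;> simp [pot, listPot, xVert, yzVert, xZeros, yzZeros, hk, abs_le] <;>
        omega
  rcases ((fromRel_adj _ _ _).mp h).2 with h | h
  · exact key h
  · rw [abs_sub_comm]
    exact key h

theorem four_mul_le_length (ht : 2 ≤ t) {a : T4Vert t m} {c : (T4graph t m).Walk a a}
    (hc : c.IsCycle) : 4 * t ≤ c.length := by
  obtain ⟨s, k, hX, hY⟩ := exists_cross_mem_support ht hc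
  obtain ⟨d₁, hd₁, d₂, hd₂, h₁out, h₁in, h₂in, h₂out, hne⟩ :=
    hc.isTrail.exists_darts_across (side s) hX (not_side_xVert (t := t) s (t - 1) k) hY
      (side_yzVert ht s (t - 2) k)
  obtain ⟨k₁, e₁, e₁'⟩ := cross_of_adj_of_not_side ht d₁.adj h₁out h₁in
  obtain ⟨k₂, e₂, e₂'⟩ := cross_of_adj_of_not_side ht d₂.adj.symm h₂out h₂in
  have hk : k₂ ≠ k₁ := by
    rintro rfl
    apply hne
    have h₁ : d₁.toProd = (xVert t (t - 1) k₂, yzVert ht s (t - 2) k₂) := Prod.ext e₁ e₁'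
    have h₂ : d₂.toProd = (yzVert ht s (t - 2) k₂, xVert t (t - 1) k₂) := Prod.ext e₂' e₂
    rw [Dart.edge, Dart.edge, h₁, h₂, Sym2.eq_swap]
  have hlen := c.two_mul_abs_sub_le_length (abs_pot_sub_le_of_adj ht k₁)
    (e₁ ▸ c.dart_fst_mem_support_of_mem_darts hd₁) (e₂ ▸ c.dart_snd_mem_support_of_mem_darts hd₂)
  rw [pot_xVert_self, pot_xVert_of_ne (by omega) hk, zero_sub, abs_neg,
    abs_of_nonneg (by positivity)] at hlen
  omega

theorem adj_of_rel {u v : T4Vert t m} (huv : u ≠ v) (h : T4Rel t m u v) : (T4graph t m).Adj u v :=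
  (fromRel_adj _ _ _).mpr ⟨huv, .inl h⟩

def xStar : T4Vert t m := .inl 0

def yStar : T4Vert t m := .inl 1

theorem adj_xStar (k : ZMod m) : (T4graph t m).Adj xStar (xVert t 0 k) :=
  adj_of_rel Sum.inl_ne_inr (.inl ⟨_, k, rfl, rfl, by simp [xZeros]⟩)

theorem adj_yStar (ht : 2 ≤ t) (k : ZMod m) : (T4graph t m).Adj yStar (yzVert ht true 0 k) :=
  adj_of_rel Sum.inl_ne_inr (.inr (.inl ⟨_, k, rfl, rfl, by simp [yzZeros]⟩))

theorem adj_xVert_succ {n : ℕ} (hn : n < t - 1) (k : ZMod m) :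
    (T4graph t m).Adj (xVert t n k) (xVert t (n + 1) k) := by
  have hne : xVert t n k ≠ xVert t (n + 1) k := fun h => by
    have := congrArg depth h
    simp only [depth_xVert] at this
    omega
  refine adj_of_rel hne (.inr (.inr (.inr (.inl ⟨_, _, k, false, rfl, rfl, ?_⟩))))
  simp only [xZeros, ← List.replicate_succ']
  congr 1
  omega

theorem adj_yzVert_succ (ht : 2 ≤ t) {n : ℕ} (hn : n < t - 2) (s : Bool) (k : ZMod m) :
    (T4graph t m).Adj (yzVert ht s n k) (yzVert ht s (n + 1) k) := by
  have hne : yzVert ht s n k ≠ yzVert ht s (n + 1) k := fun h => by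
    have := congrArg depth h
    simp only [depth_yzVert] at this
    omega
  refine adj_of_rel hne (.inr (.inr (.inr (.inr (.inl ⟨s, _, _, k, false, rfl, rfl, ?_⟩)))))
  simp only [yzZeros, ← List.replicate_succ']
  congr 1
  omega

theorem adj_xVert_yzVert (ht : 2 ≤ t) (s : Bool) (k : ZMod m) :
    (T4graph t m).Adj (xVert t (t - 1) k) (yzVert ht s (t - 2) k) :=
  adj_of_rel (fun h => Sum.inl_ne_inr (congrArg Prod.fst (Sum.inr_injective h)))
    (.inr (.inr (.inr (.inr (.inr ⟨s, _, _, k, rfl, rfl, by simp [xZeros], by simp [yzZeros]⟩)))))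

-- The position along `longCycle`, from `0` at `x*` to `4t - 1` at `(x, ε, 1)`.
def cyclePos (t : ℕ) : T4Vert t m → ℤ
  | .inl j => if j = 0 then 0 else 2 * t
  | .inr (.inl b, k) => if k = 0 then b.val.length + 1 else 4 * t - 1 - b.val.length
  | .inr (.inr (_, e), k) => if k = 0 then 2 * t - 1 - e.val.length else 2 * t + 1 + e.val.length

def longPath (ht : 2 ≤ t) : (T4graph t m).Walk xStar (xVert t 0 1) :=
  .cons (adj_xStar 0) <|
  (Walk.ofChain (xVert t · 0) (t - 1) fun _ hj => adj_xVert_succ hj 0).append <|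
  .cons (adj_xVert_yzVert ht true 0) <|
  (Walk.ofChain (yzVert ht true · 0) (t - 2) fun _ hj =>
    adj_yzVert_succ ht hj true 0).reverse.append <|
  .cons (adj_yStar ht 0).symm <|
  .cons (adj_yStar ht 1) <|
  (Walk.ofChain (yzVert ht true · 1) (t - 2) fun _ hj => adj_yzVert_succ ht hj true 1).append <|
  .cons (adj_xVert_yzVert ht true 1).symm <|
  (Walk.ofChain (xVert t · 1) (t - 1) fun _ hj => adj_xVert_succ hj 1).reverse

def longCycle (ht : 2 ≤ t) : (T4graph t m).Walk (xVert t 0 1) (xVert t 0 1) :=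
  .cons (adj_xStar 1).symm (longPath ht)

theorem length_longCycle (ht : 2 ≤ t) : (longCycle ht (m := m)).length = 4 * t := by
  simp only [longCycle, longPath, Walk.length_cons, Walk.length_append, Walk.length_reverse,
    Walk.length_ofChain]
  omega

theorem isCycle_longCycle (ht : 2 ≤ t) (hm : 2 ≤ m) : (longCycle ht (m := m)).IsCycle := by
  have : Fact (1 < m) := ⟨hm⟩
  have h10 : (1 : ZMod m) ≠ 0 := one_ne_zero
  have hrise : (longPath ht (m := m)).Rising (cyclePos t) := by
    refine .cons _ ?_ <| .append (Walk.rising_ofChain _ _ ?_) <| .cons _ ?_ <|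
      .append (Walk.rising_reverse_ofChain _ _ ?_) <| .cons _ ?_ <| .cons _ ?_ <|
      .append (Walk.rising_ofChain _ _ ?_) <| .cons _ ?_ <| Walk.rising_reverse_ofChain _ _ ?_
    all_goals
      try intro j hj
      simp [cyclePos, xStar, yStar, xVert, yzVert, xZeros, yzZeros, h10] <;> omega
  exact hrise.isCycle_cons _ (by simp [cyclePos, xStar, xVert, xZeros, h10]; omega)

end T4graph

/-- for all integers `t ≥ 2` and `m ≥ 2`, the girth of `(T_{4t}; m)`
equals `4t`. -/
theorem statement15 (t m : ℕ) (ht : 2 ≤ t) (hm : 2 ≤ m) :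
    (T4graph t m).egirth = ((4 * t : ℕ) : ℕ∞) := by
  refine le_antisymm ?_ (le_egirth.mpr fun _ c hc => by
    exact_mod_cast T4graph.four_mul_le_length ht hc)
  simpa [T4graph.length_longCycle] using egirth_le_length (T4graph.isCycle_longCycle ht hm)
end
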